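/- For any even p, the worst-case egalitarian rank of a balanced CSAM with all-pessimistic agents is n^p − (n−1)p/2, and no CSAM with all-pessimistic agents achieves a smaller worst-case egalitarian rank. -/

import Mathlib

open scoped Classical

/-- A bundle in a basic categorized domain: one item (from `Fin n`) per category (`Fin p`). -/
abbrev Bundle (n p : ℕ) := Fin p → Fin n

/-- A preference: a binary relation on bundles (`R a b` means `a` is strictly preferred to `b`). -/
abbrev Pref (n p : ℕ) := Bundle n p → Bundle n p → Prop

/-- A profile assigns a preference to each of the `n` agents. -/
abbrev Profile (n p : ℕ) := Fin n → Pref n p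

/-- A categorial sequential allocation mechanism: a linear order over agent–category
pairs, i.e. a bijection from rounds `Fin (n*p)` to pairs. -/
abbrev Csam (n p : ℕ) := Fin (n * p) ≃ Fin n × Fin p

/-- All preferences in the profile are strict linear orders. -/
def ValidProfile {n p : ℕ} (P : Profile n p) : Prop :=
  ∀ j, IsStrictTotalOrder (Bundle n p) (P j)

/-- A valid allocation: in every category, no item is given to two agents. -/
def ValidAlloc {n p : ℕ} (A : Fin n → Bundle n p) : Prop :=
  ∀ i : Fin p, Function.Injective fun j => A j i

/-- The rank of bundle `b` in preference `R` (1 = best, `n^p` = worst). -/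
noncomputable def rank {n p : ℕ} (R : Pref n p) (b : Bundle n p) : ℕ :=
  1 + (Finset.univ.filter fun c => R c b).card

/-- `kval O j i`: the number of category-`i` items still available when agent `j`
picks from category `i` (depends only on `O`). -/
def kval {n p : ℕ} (O : Csam n p) (j : Fin n) (i : Fin p) : ℕ :=
  1 + (Finset.univ.filter fun j' : Fin n => O.symm (j, i) < O.symm (j', i)).card

/-- `Oj O j l`: the `l`-th category (0-based) that agent `j` visits in `O`. -/
noncomputable def Oj {n p : ℕ} (O : Csam n p) (j : Fin n) (l : Fin p) : Fin p :=
  (O ((Finset.univ.image fun i : Fin p => O.symm (j, i)).orderIsoOfFin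
      (by
        rw [Finset.card_image_of_injective _
          (fun a b h => congrArg Prod.snd (O.symm.injective h))]
        simp) l).1).2

/-- `NoInterruptF O j K`: for every later position `l > K` of agent `j`, no other agent
picks from category `Oj O j l` between agent `j`'s pick in category `Oj O j K`
and her pick in category `Oj O j l`. -/
def NoInterruptF {n p : ℕ} (O : Csam n p) (j : Fin n) (K : ℕ) : Prop :=
  ∀ lK : Fin p, (lK : ℕ) = K → ∀ l : Fin p, lK < l → ∀ j' : Fin n, j' ≠ j →
    ¬ (O.symm (j, Oj O j lK) < O.symm (j', Oj O j l) ∧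
       O.symm (j', Oj O j l) < O.symm (j, Oj O j l))

/-- `Kval O j`: the smallest (0-based) index `K` such that agent `j` is not interrupted
from position `K` onwards. -/
noncomputable def Kval {n p : ℕ} (O : Csam n p) (j : Fin n) : ℕ :=
  sInf {K : ℕ | K < p ∧ NoInterruptF O j K}

/-- Item `d` of category `i` is still available at round `t` under final allocation `A`. -/
def availAt {n p : ℕ} (O : Csam n p) (A : Fin n → Bundle n p) (t : Fin (n * p))
    (i : Fin p) (d : Fin n) : Prop :=
  ∀ j' : Fin n, O.symm (j', i) < t → A j' i ≠ d

/-- Bundle `b` is still achievable by agent `j` at round `t`: it agrees with her previous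
choices and all remaining components are still available. -/
def achievable {n p : ℕ} (O : Csam n p) (A : Fin n → Bundle n p) (j : Fin n)
    (t : Fin (n * p)) (b : Bundle n p) : Prop :=
  (∀ c : Fin p, O.symm (j, c) < t → b c = A j c) ∧
  (∀ c : Fin p, ¬ O.symm (j, c) < t → availAt O A t c (b c))

/-- Agent `j` plays optimistically in the run producing allocation `A`: at each of her
rounds she picks the item of her top-ranked still-achievable bundle. -/
def OptPlays {n p : ℕ} (O : Csam n p) (P : Profile n p) (A : Fin n → Bundle n p)
    (j : Fin n) : Prop :=
  ∀ i : Fin p, ∃ b : Bundle n p, achievable O A j (O.symm (j, i)) b ∧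
    (∀ b' : Bundle n p, achievable O A j (O.symm (j, i)) b' → b' ≠ b → P j b b') ∧
    A j i = b i

/-- Agent `j` plays pessimistically in the run producing `A`: at each of her rounds, for
every available alternative item `d'`, some achievable bundle with component `d'` is worse
than every achievable bundle with the component she actually chose. -/
def PesPlays {n p : ℕ} (O : Csam n p) (P : Profile n p) (A : Fin n → Bundle n p)
    (j : Fin n) : Prop :=
  ∀ i : Fin p, ∀ d' : Fin n, availAt O A (O.symm (j, i)) i d' → d' ≠ A j i →
    ∃ w' : Bundle n p, achievable O A j (O.symm (j, i)) w' ∧ w' i = d' ∧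
      ∀ w : Bundle n p, achievable O A j (O.symm (j, i)) w → w i = A j i → P j w w'

/-- `∏_{l = K_j}^{p} k_{j, O_j(l)}`. -/
noncomputable def optProd {n p : ℕ} (O : Csam n p) (j : Fin n) : ℕ :=
  ∏ l ∈ Finset.univ.filter (fun l : Fin p => Kval O j ≤ (l : ℕ)), kval O j (Oj O j l)

/-- `∑_{l = 1}^{p} (k_{j, O_j(l)} - 1)`. -/
noncomputable def pesSum {n p : ℕ} (O : Csam n p) (j : Fin n) : ℕ :=
  ∑ l : Fin p, (kval O j (Oj O j l) - 1)

/-- `O` is a balanced CSAM: agents pick in `p` phases (one category per phase, phase order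
`τ`), in agent order `σ` in even (0-based) phases and in reverse order in odd phases. -/
def IsBalanced {n p : ℕ} (O : Csam n p) : Prop :=
  ∃ σ : Fin n ≃ Fin n, ∃ τ : Fin p ≃ Fin p,
    ∀ j : Fin n, ∀ i : Fin p,
      ((O.symm (j, i) : ℕ)) =
        (τ.symm i : ℕ) * n +
          (if (τ.symm i : ℕ) % 2 = 0 then (σ j : ℕ) else n - 1 - (σ j : ℕ))

/-!
Write `k_{j,i} - 1` for the number of agents who pick in category `i` after agent `j`; these
leave at least `k_{j,i} - 1` items other than her own available when `j` picks in `i`. For each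
such item `d` passed over, pessimism yields a bundle through `d` agreeing with `j`'s earlier picks
and worse than her final bundle. Bundles obtained at different picks differ at the earlier of the
two categories, so at least `∑ᵢ (k_{j,i} - 1)` bundles are worse than hers.

Conversely, let agent `j` rank below her diagonal bundle `(j, …, j)` only the bundles deviating
from it in a single category `i` to an item of a later picker, ranked among themselves by the
round of `j`'s pick in `i`, later being better. Then taking item `j` in every category is pessimistic play, and there are at most
`∑ᵢ (k_{j,i} - 1)` bundles below it.

In a balanced CSAM each agent's sum is `(n - 1)p/2`, since in two consecutive phases she has
exactly the other `n - 1` agents after her once; in any CSAM the sums average to `(n - 1)p/2`.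
-/

open Finset Function

section StrictTotalOrder

variable {α : Type*} [Fintype α]

lemma card_rel_add_card_rel (r : α → α → Prop) [IsStrictTotalOrder α r] (b : α) :
    #{c | r c b} + #{c | r b c} + 1 = Fintype.card α := by
  have hnot : ({c | ¬ r c b} : Finset α) = insert b ({c | r b c} : Finset α) := by
    ext c
    simp only [mem_filter, mem_univ, true_and, mem_insert]
    rcases trichotomous_of r c b with h | rfl | h
    · exact iff_of_false (not_not.2 h) (by rintro (rfl | h'); exacts [irrefl _ h, asymm h h'])
    · exact iff_of_true (irrefl _) (Or.inl rfl)
    · exact iff_of_true (asymm h) (Or.inr h)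
  rw [← card_univ, ← card_filter_add_card_filter_not (s := univ) (p := fun c => r c b), hnot,
    card_insert_of_notMem (by simp [irrefl]), add_assoc]

lemma card_lt_add_card_gt {β : Type*} [LinearOrder β] {f : α → β} (hf : Injective f) (b : α) :
    #{c | f c < f b} + #{c | f b < f c} + 1 = Fintype.card α := by
  have := hf.isStrictTotalOrder_onFun (· < ·)
  convert card_rel_add_card_rel ((· < ·) on f) b

end StrictTotalOrder

section Csam

variable {n p : ℕ}

section PickCounts

lemma Oj_bijective (O : Csam n p) (j : Fin n) : Bijective (Oj O j) := by
  refine Finite.injective_iff_bijective.mp fun l₁ l₂ h => ?_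
  have hround : ∀ x ∈ univ.image fun i : Fin p => O.symm (j, i), O.symm (j, (O x).2) = x := by
    rintro _ hx
    obtain ⟨i, -, rfl⟩ := mem_image.1 hx
    simp
  have h' := congrArg (fun i => O.symm (j, i)) h
  simp only [Oj, hround _ (Subtype.prop _)] at h'
  exact OrderIso.injective _ (Subtype.ext h')

lemma pesSum_eq_sum_kval (O : Csam n p) (j : Fin n) :
    pesSum O j = ∑ i, (kval O j i - 1) :=
  (Oj_bijective O j).sum_comp fun i => kval O j i - 1

lemma kval_sub_one (O : Csam n p) (j : Fin n) (i : Fin p) :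
    kval O j i - 1 = #{j' | O.symm (j, i) < O.symm (j', i)} := by
  simp [kval]

lemma pickTime_injective (O : Csam n p) (i : Fin p) : Injective fun j : Fin n => O.symm (j, i) :=
  O.symm.injective.comp (Prod.mk_left_injective i)

lemma card_earlier_add_card_later (O : Csam n p) (j : Fin n) (i : Fin p) :
    #{j' | O.symm (j', i) < O.symm (j, i)} + #{j' | O.symm (j, i) < O.symm (j', i)} + 1 = n := by
  simpa using card_lt_add_card_gt (pickTime_injective O i) j

lemma two_mul_sum_kval_sub_one (O : Csam n p) (i : Fin p) :
    2 * ∑ j, (kval O j i - 1) = n * (n - 1) := by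
  have hswap : ∑ j, #{j' | O.symm (j, i) < O.symm (j', i)}
      = ∑ j, #{j' | O.symm (j', i) < O.symm (j, i)} := by
    simp only [card_filter]
    exact sum_comm
  have hpair : ∑ j, (#{j' | O.symm (j', i) < O.symm (j, i)}
      + #{j' | O.symm (j, i) < O.symm (j', i)}) = ∑ _j : Fin n, (n - 1) :=
    sum_congr rfl fun j _ => by have := card_earlier_add_card_later O j i; omega
  rw [sum_add_distrib, sum_const, card_univ, Fintype.card_fin, smul_eq_mul, ← hswap] at hpair
  simp only [kval_sub_one]
  omega

lemma two_mul_sum_pesSum (O : Csam n p) : 2 * ∑ j, pesSum O j = p * (n * (n - 1)) := by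
  simp only [pesSum_eq_sum_kval]
  rw [sum_comm, mul_sum]
  simp [two_mul_sum_kval_sub_one]

lemma exists_pesSum_le (hn : 0 < n) (O : Csam n p) : ∃ j, pesSum O j ≤ (n - 1) * p / 2 := by
  by_contra! h
  have hlt : ∑ _j : Fin n, ((n - 1) * p + 1) ≤ ∑ j, 2 * pesSum O j :=
    sum_le_sum fun j _ => by have := h j; omega
  rw [sum_const, card_univ, Fintype.card_fin, smul_eq_mul, ← mul_sum, two_mul_sum_pesSum] at hlt
  have : n * ((n - 1) * p + 1) = p * (n * (n - 1)) + n := by ring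
  omega

end PickCounts

section Balanced

lemma sum_range_two_mul_ite (a b k : ℕ) :
    ∑ m ∈ range (2 * k), (if m % 2 = 0 then a else b) = k * (a + b) := by
  induction k with
  | zero => simp
  | succ k ih =>
    rw [Nat.mul_succ, sum_range_succ, sum_range_succ, ih, if_pos (by omega), if_neg (by omega)]
    ring

lemma pesSum_eq_of_isBalanced {O : Csam n p} (hpe : Even p) (hO : IsBalanced O) (j : Fin n) :
    pesSum O j = (n - 1) * p / 2 := by
  obtain ⟨σ, τ, hO⟩ := hO
  have hσ := card_lt_add_card_gt σ.injective j
  rw [Fintype.card_fin] at hσ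
  have hk : ∀ i, kval O j i - 1 = if (τ.symm i : ℕ) % 2 = 0
      then #{j' | σ j < σ j'} else #{j' | σ j' < σ j} := by
    intro i
    rw [kval_sub_one]
    split_ifs with h <;> congr 1 <;> ext j' <;>
      simp only [mem_filter, mem_univ, true_and, Fin.lt_def, hO, h, if_true, if_false] <;>
      have := (σ j).2 <;> have := (σ j').2 <;> omega
  obtain ⟨k, rfl⟩ := hpe
  rw [pesSum_eq_sum_kval, sum_congr rfl fun i _ => hk i,
    Equiv.sum_comp τ.symm (fun m : Fin (k + k) => if (m : ℕ) % 2 = 0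
      then #{j' | σ j < σ j'} else #{j' | σ j' < σ j}),
    Fin.sum_univ_eq_sum_range (fun m => if m % 2 = 0
      then #{j' | σ j < σ j'} else #{j' | σ j' < σ j}), ← two_mul, sum_range_two_mul_ite,
    Nat.mul_div_assoc _ (dvd_mul_right 2 k), Nat.mul_div_cancel_left k two_pos, mul_comm]
  congr 1
  omega

end Balanced

section UpperBound

lemma rank_eq_sub_card_worse (R : Pref n p) [IsStrictTotalOrder _ R] (b : Bundle n p) :
    rank R b = n ^ p - #{c | R b c} := by
  have := card_rel_add_card_rel R b
  rw [Fintype.card_fun, Fintype.card_fin, Fintype.card_fin] at this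
  rw [rank]
  omega

lemma achievable_self {O : Csam n p} {A : Fin n → Bundle n p} (hA : ValidAlloc A) (j : Fin n)
    (t : Fin (n * p)) : achievable O A j t (A j) :=
  ⟨fun _ _ => rfl, fun c hc j' hj' h => by
    obtain rfl := hA c h
    exact hc hj'⟩

lemma exists_worse_of_pesPlays {O : Csam n p} {P : Profile n p} {A : Fin n → Bundle n p}
    (hA : ValidAlloc A) {j : Fin n} (hj : PesPlays O P A j) {i : Fin p} {d : Fin n}
    (hd : availAt O A (O.symm (j, i)) i d) (hne : d ≠ A j i) :
    ∃ w, (∀ c, O.symm (j, c) < O.symm (j, i) → w c = A j c) ∧ w i = d ∧ P j (A j) w := by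
  obtain ⟨w, hw, rfl, hworse⟩ := hj i d hd hne
  exact ⟨w, hw.1, rfl, hworse (A j) (achievable_self hA j _) rfl⟩

lemma kval_sub_one_le_card_avail (O : Csam n p) (A : Fin n → Bundle n p) (j : Fin n)
    (i : Fin p) : kval O j i - 1 ≤ #{d | availAt O A (O.symm (j, i)) i d ∧ d ≠ A j i} := by
  have hsub : ({d | ¬ (availAt O A (O.symm (j, i)) i d ∧ d ≠ A j i)} : Finset (Fin n))
      ⊆ insert (A j i) (({j' | O.symm (j', i) < O.symm (j, i)} : Finset (Fin n)).image
          fun j' => A j' i) := by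
    intro d hd
    simp only [availAt, mem_filter, mem_univ, true_and, not_and_or, not_forall, not_not,
      exists_prop] at hd
    simp only [mem_insert, mem_image, mem_filter, mem_univ, true_and]
    rcases hd with ⟨j', hj', rfl⟩ | rfl
    · exact Or.inr ⟨j', hj', rfl⟩
    · exact Or.inl rfl
  have hcompl := card_filter_add_card_filter_not (s := univ)
    (p := fun d => availAt O A (O.symm (j, i)) i d ∧ d ≠ A j i)
  have := (card_le_card hsub).trans ((card_insert_le _ _).trans (Nat.succ_le_succ card_image_le))
  have := card_earlier_add_card_later O j i
  rw [card_univ, Fintype.card_fin] at hcompl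
  rw [kval_sub_one]
  omega

lemma pesSum_le_card_worse {O : Csam n p} {P : Profile n p} {A : Fin n → Bundle n p}
    (hA : ValidAlloc A) {j : Fin n} (hj : PesPlays O P A j) :
    pesSum O j ≤ #{c | P j (A j) c} := by
  have hw : ∀ i d, ∃ w : Bundle n p, availAt O A (O.symm (j, i)) i d ∧ d ≠ A j i →
      (∀ c, O.symm (j, c) < O.symm (j, i) → w c = A j c) ∧ w i = d ∧ P j (A j) w := by
    intro i d
    by_cases h : availAt O A (O.symm (j, i)) i d ∧ d ≠ A j i
    · exact (exists_worse_of_pesPlays hA hj h.1 h.2).imp fun _ hw _ => hw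
    · exact ⟨A j, fun h' => absurd h' h⟩
  choose w hw using hw
  set T := univ.sigma fun i => ({d | availAt O A (O.symm (j, i)) i d ∧ d ≠ A j i} : Finset _)
  have hT : ∀ x ∈ T, availAt O A (O.symm (j, x.1)) x.1 x.2 ∧ x.2 ≠ A j x.1 := by
    intro x hx
    simpa [T] using hx
  have hsep : ∀ x ∈ T, ∀ y ∈ T, O.symm (j, x.1) < O.symm (j, y.1) → w x.1 x.2 ≠ w y.1 y.2 := by
    intro x hx y hy hlt heq
    have hy' := (hw y.1 y.2 (hT y hy)).1 x.1 hlt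
    rw [← heq, (hw x.1 x.2 (hT x hx)).2.1] at hy'
    exact (hT x hx).2 hy'
  have hinj : Set.InjOn (fun x : (_ : Fin p) × Fin n => w x.1 x.2) T := by
    rintro ⟨i₁, d₁⟩ hx ⟨i₂, d₂⟩ hy heq
    rcases lt_trichotomy (O.symm (j, i₁)) (O.symm (j, i₂)) with h | h | h
    · exact absurd heq (hsep _ hx _ hy h)
    · obtain rfl : i₁ = i₂ := (Prod.ext_iff.1 (O.symm.injective h)).2
      have := congrFun heq i₁
      simp only [(hw _ _ (hT _ hx)).2.1, (hw _ _ (hT _ hy)).2.1] at this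
      rw [this]
    · exact absurd heq.symm (hsep _ hy _ hx h)
  calc pesSum O j ≤ #T := by
        rw [card_sigma, pesSum_eq_sum_kval]
        exact sum_le_sum fun i _ => kval_sub_one_le_card_avail O A j i
    _ ≤ #{c | P j (A j) c} := card_le_card_of_injOn _
        (fun x hx => by simpa using (hw x.1 x.2 (hT x hx)).2.2) hinj

lemma rank_le_of_pesPlays {O : Csam n p} {P : Profile n p} (hP : ValidProfile P)
    {A : Fin n → Bundle n p} (hA : ValidAlloc A) {j : Fin n} (hj : PesPlays O P A j) :
    rank (P j) (A j) ≤ n ^ p - pesSum O j := by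
  have := hP j
  rw [rank_eq_sub_card_worse]
  have := pesSum_le_card_worse hA hj
  omega

end UpperBound

section Diagonal

def diagAlloc (n p : ℕ) : Fin n → Bundle n p := fun j _ => j

lemma validAlloc_diagAlloc : ValidAlloc (diagAlloc n p) := fun _ _ _ h => h

def lateDeviations (O : Csam n p) (j : Fin n) : Finset (Bundle n p) :=
  (univ.sigma fun i => ({d | O.symm (j, i) < O.symm (d, i)} : Finset (Fin n))).image
    fun x => update (diagAlloc n p j) x.1 x.2

lemma card_lateDeviations_le (O : Csam n p) (j : Fin n) :
    #(lateDeviations O j) ≤ pesSum O j := by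
  refine card_image_le.trans (le_of_eq ?_)
  rw [card_sigma, pesSum_eq_sum_kval]
  exact sum_congr rfl fun i _ => (kval_sub_one O j i).symm

/-- A higher score is better. A late deviation deviates in a single category, so the `sup` is the
round of `j`'s pick in that category. -/
noncomputable def diagScore (O : Csam n p) (j : Fin n) (b : Bundle n p) : ℕ :=
  if b = diagAlloc n p j then n * p
  else if b ∈ lateDeviations O j then ({c | b c ≠ j} : Finset (Fin p)).sup fun c => O.symm (j, c)
  else n * p + 1

lemma diagScore_update {O : Csam n p} {j : Fin n} {i : Fin p} {d : Fin n}
    (h : O.symm (j, i) < O.symm (d, i)) :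
    diagScore O j (update (diagAlloc n p j) i d) = O.symm (j, i) := by
  have hd : d ≠ j := by rintro rfl; exact lt_irrefl _ h
  have hdev : ({c | update (diagAlloc n p j) i d c ≠ j} : Finset (Fin p)) = {i} := by
    ext c
    by_cases hc : c = i
    · simp [hc, hd]
    · simp [hc, diagAlloc]
  have hmem : update (diagAlloc n p j) i d ∈ lateDeviations O j :=
    mem_image.2 ⟨⟨i, d⟩, by simpa using h, rfl⟩
  rw [diagScore, if_neg (fun h' => hd (by simpa [diagAlloc] using congrFun h' i)), if_pos hmem,
    hdev, sup_singleton]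

lemma diagScore_self (O : Csam n p) (j : Fin n) : diagScore O j (diagAlloc n p j) = n * p :=
  if_pos rfl

lemma diagScore_of_notMem {O : Csam n p} {j : Fin n} {b : Bundle n p}
    (hdiag : b ≠ diagAlloc n p j) (hlate : b ∉ lateDeviations O j) :
    diagScore O j b = n * p + 1 := by
  rw [diagScore, if_neg hdiag, if_neg hlate]

noncomputable def diagKey (O : Csam n p) (j : Fin n) (b : Bundle n p) : ℕ ×ₗ Fin (n ^ p) :=
  toLex (diagScore O j b, finFunctionFinEquiv b)

lemma diagKey_injective (O : Csam n p) (j : Fin n) : Injective (diagKey O j) := fun _ _ h =>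
  finFunctionFinEquiv.injective (Prod.ext_iff.1 (toLex.injective h)).2

lemma diagKey_lt_of_diagScore_lt {O : Csam n p} {j : Fin n} {b c : Bundle n p}
    (h : diagScore O j b < diagScore O j c) : diagKey O j b < diagKey O j c :=
  Prod.Lex.toLex_lt_toLex.2 (Or.inl h)

noncomputable def diagProfile (O : Csam n p) : Profile n p :=
  fun j b c => diagKey O j c < diagKey O j b

lemma validProfile_diagProfile (O : Csam n p) : ValidProfile (diagProfile O) := fun j =>
  (diagKey_injective O j).isStrictTotalOrder_onFun (· > ·)

lemma pesPlays_diagAlloc (O : Csam n p) (j : Fin n) :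
    PesPlays O (diagProfile O) (diagAlloc n p) j := by
  intro i d hd hne
  have hlt : O.symm (j, i) < O.symm (d, i) := by
    refine lt_of_le_of_ne (not_lt.1 fun h => hd d h rfl) fun h => hne ?_
    exact ((Prod.ext_iff.1 (O.symm.injective h)).1).symm
  refine ⟨update (diagAlloc n p j) i d, ⟨fun c hc => ?_, fun c hc j' hj' => ?_⟩, update_self .., ?_⟩
  · rw [update_of_ne (by rintro rfl; exact lt_irrefl _ hc)]
  · by_cases hci : c = i
    · subst hci
      simpa using hd j' hj'
    · rw [update_of_ne hci]
      rintro rfl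
      exact hc hj'
  · intro w hw hwi
    apply diagKey_lt_of_diagScore_lt
    rw [diagScore_update hlt]
    by_cases hdiag : w = diagAlloc n p j
    · rw [hdiag, diagScore_self]
      exact (O.symm (j, i)).2
    by_cases hlate : w ∈ lateDeviations O j
    · obtain ⟨⟨i', d'⟩, hx, rfl⟩ := mem_image.1 hlate
      have hlt' : O.symm (j, i') < O.symm (d', i') := by simpa using hx
      have hd' : d' ≠ j := by rintro rfl; exact lt_irrefl _ hlt'
      have hi' : i' ≠ i := by rintro rfl; exact hd' (by simpa [diagAlloc] using hwi)
      rw [diagScore_update hlt']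
      refine lt_of_le_of_ne (not_lt.1 fun h => hd' ?_) fun h => hi' ?_
      · simpa [diagAlloc] using hw.1 i' h
      · exact ((Prod.ext_iff.1 (O.symm.injective (Fin.ext h))).2).symm
    · rw [diagScore_of_notMem hdiag hlate]
      have := (O.symm (j, i)).2
      omega

lemma card_worse_diagAlloc_le (O : Csam n p) (j : Fin n) :
    #{c | diagProfile O j (diagAlloc n p j) c} ≤ pesSum O j := by
  refine (card_le_card fun c hc => ?_).trans (card_lateDeviations_le O j)
  have hc' : diagKey O j c < diagKey O j (diagAlloc n p j) := (mem_filter.1 hc).2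
  by_contra hlate
  have hdiag : c ≠ diagAlloc n p j := by rintro rfl; exact lt_irrefl _ hc'
  refine lt_asymm hc' (diagKey_lt_of_diagScore_lt ?_)
  rw [diagScore_self, diagScore_of_notMem hdiag hlate]
  omega

lemma sub_pesSum_le_rank_diagAlloc (O : Csam n p) (j : Fin n) :
    n ^ p - pesSum O j ≤ rank (diagProfile O j) (diagAlloc n p j) := by
  have := validProfile_diagProfile O j
  rw [rank_eq_sub_card_worse]
  have := card_worse_diagAlloc_le O j
  omega

end Diagonal

end Csam

theorem statement13_general (n p : ℕ) (hn : 0 < n) (hpe : Even p)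
    (O : Csam n p) (hO : IsBalanced O) :
    (∀ P : Profile n p, ValidProfile P →
      ∀ A : Fin n → Bundle n p, ValidAlloc A → (∀ j, PesPlays O P A j) →
        ∀ j : Fin n, rank (P j) (A j) ≤ n ^ p - (n - 1) * p / 2) ∧
    (∃ P : Profile n p, ValidProfile P ∧
      ∃ A : Fin n → Bundle n p, ValidAlloc A ∧ (∀ j, PesPlays O P A j) ∧
        ∃ j : Fin n, rank (P j) (A j) = n ^ p - (n - 1) * p / 2) ∧
    (∀ O' : Csam n p, ∃ P : Profile n p, ValidProfile P ∧
      ∃ A : Fin n → Bundle n p, ValidAlloc A ∧ (∀ j, PesPlays O' P A j) ∧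
        ∃ j : Fin n, n ^ p - (n - 1) * p / 2 ≤ rank (P j) (A j)) := by
  refine ⟨fun P hP A hA hpes j => ?_, ?_, fun O' => ?_⟩
  · rw [← pesSum_eq_of_isBalanced hpe hO j]
    exact rank_le_of_pesPlays hP hA (hpes j)
  · refine ⟨diagProfile O, validProfile_diagProfile O, diagAlloc n p, validAlloc_diagAlloc,
      pesPlays_diagAlloc O, ⟨0, hn⟩, ?_⟩
    rw [← pesSum_eq_of_isBalanced hpe hO]
    exact le_antisymm (rank_le_of_pesPlays (validProfile_diagProfile O) validAlloc_diagAlloc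
      (pesPlays_diagAlloc O _)) (sub_pesSum_le_rank_diagAlloc O _)
  · obtain ⟨j, hj⟩ := exists_pesSum_le hn O'
    exact ⟨diagProfile O', validProfile_diagProfile O', diagAlloc n p, validAlloc_diagAlloc,
      pesPlays_diagAlloc O', j,
      (Nat.sub_le_sub_left hj _).trans (sub_pesSum_le_rank_diagAlloc O' j)⟩

theorem statement13 (n p : ℕ) (hn : 0 < n) (hp : 0 < p) (hpe : Even p)
    (O : Csam n p) (hO : IsBalanced O) :
    (∀ P : Profile n p, ValidProfile P →
      ∀ A : Fin n → Bundle n p, ValidAlloc A → (∀ j, PesPlays O P A j) →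
        ∀ j : Fin n, rank (P j) (A j) ≤ n ^ p - (n - 1) * p / 2) ∧
    (∃ P : Profile n p, ValidProfile P ∧
      ∃ A : Fin n → Bundle n p, ValidAlloc A ∧ (∀ j, PesPlays O P A j) ∧
        ∃ j : Fin n, rank (P j) (A j) = n ^ p - (n - 1) * p / 2) ∧
    (∀ O' : Csam n p, ∃ P : Profile n p, ValidProfile P ∧
      ∃ A : Fin n → Bundle n p, ValidAlloc A ∧ (∀ j, PesPlays O' P A j) ∧
        ∃ j : Fin n, n ^ p - (n - 1) * p / 2 ≤ rank (P j) (A j)) :=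
  statement13_general n p hn hpe O hO
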